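/- Let z_1,…,z_N be N distinct complex numbers, let α_1,…,α_r be complex numbers none of which equals any node z_k, let m_1,…,m_r be nonnegative integers, and let D_{m_1,…,m_r} be the N×N matrix with diagonal entries Σ_{k≠i} 1/(z_i − z_k) − Σ_{l=1}^r m_l/(z_i − α_l) and off-diagonal entries (for i ≠ j) (1/(z_i − z_j)) · (ω'(z_i)/ω'(z_j)) · ∏_{l=1}^r ((z_j − α_l)/(z_i − α_l))^{m_l}, where ω'(z_i) = ∏_{k≠i}(z_i − z_k). If P is a complex polynomial of degree at most N−1 and f(z) = P(z)/∏_{l=1}^r (z − α_l)^{m_l}, then for every i, f'(z_i) = Σ_{j=1}^N (D_{m_1,…,m_r})_{ij} f(z_j). -/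

import Mathlib

open Finset Polynomial

/-! Lagrange interpolation at the nodes, with basis polynomials `ℓ_j`, gives
`P' (z i) = ∑ j, P (z j) * ℓ_j' (z i)`, and the product rule evaluates `ℓ_j' (z i)`: it is `∑_{k ≠ i} 1 / (z i - z k)` for `j = i` (no factor of
`ℓ_i` vanishes at `z i`) and `ω'(z i) / ((z i - z j) ω'(z j))` for `j ≠ i` (only the factor
`X - z i` does). With `Q z = ∏ l, (z - α l) ^ m l` one has `f' = (P' - (Q' / Q) P) / Q` and
`Q' / Q = ∑ l, m l / (z - α l)`; hence
`D i j = ℓ_j' (z i) * Q (z j) / Q (z i) - δ_ij * Q' (z i) / Q (z i)`. -/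

namespace Polynomial

variable {R : Type*} [CommRing R] {ι : Type*} [DecidableEq ι]

theorem eval_derivative_prod_of_eval_eq_zero {s : Finset ι} {f : ι → R[X]} {a : ι} {x : R}
    (ha : a ∈ s) (hfa : (f a).eval x = 0) :
    (derivative (∏ k ∈ s, f k)).eval x =
      (derivative (f a)).eval x * ∏ k ∈ s.erase a, (f k).eval x := by
  rw [derivative_prod_finset, eval_finsetSum, sum_eq_single_of_mem a ha, eval_mul, eval_prod,
    mul_comm]
  intro b hb hba
  rw [eval_mul, eval_prod, prod_eq_zero (mem_erase.mpr ⟨Ne.symm hba, ha⟩) hfa, zero_mul]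

theorem eval_derivative_prod_of_eval_ne_zero {F : Type*} [Field F] {s : Finset ι} {f : ι → F[X]}
    {x : F} (hf : ∀ k ∈ s, (f k).eval x ≠ 0) :
    (derivative (∏ k ∈ s, f k)).eval x =
      (∑ k ∈ s, (derivative (f k)).eval x / (f k).eval x) * ∏ k ∈ s, (f k).eval x := by
  rw [derivative_prod_finset, eval_finsetSum, sum_mul]
  refine sum_congr rfl fun k hk => ?_
  rw [eval_mul, eval_prod, ← mul_prod_erase s _ hk, ← mul_assoc, div_mul_cancel₀ _ (hf k hk),
    mul_comm]

end Polynomial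

namespace Lagrange

variable {F : Type*} [Field F] {ι : Type*} [DecidableEq ι] {s : Finset ι} {v : ι → F} {i j : ι}

theorem derivative_basisDivisor (x y : F) : derivative (basisDivisor x y) = C (x - y)⁻¹ := by
  simp [basisDivisor]

theorem eval_derivative_basis_self (hvs : Set.InjOn v s) (hi : i ∈ s) :
    (derivative (Lagrange.basis s v i)).eval (v i) = ∑ k ∈ s.erase i, (v i - v k)⁻¹ := by
  have hdiv : ∀ k ∈ s.erase i, (basisDivisor (v i) (v k)).eval (v i) = 1 := fun k hk =>
    eval_basisDivisor_left_of_ne fun h => (mem_erase.mp hk).1 (hvs (mem_of_mem_erase hk) hi h.symm)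
  rw [Lagrange.basis, eval_derivative_prod_of_eval_ne_zero fun k hk => by simp [hdiv k hk],
    prod_congr rfl hdiv, prod_const_one, mul_one]
  exact sum_congr rfl fun k hk => by rw [hdiv k hk, derivative_basisDivisor, eval_C, div_one]

theorem eval_derivative_basis_of_ne (hvs : Set.InjOn v s) (hi : i ∈ s) (hj : j ∈ s)
    (hij : i ≠ j) :
    (derivative (Lagrange.basis s v j)).eval (v i) =
      (∏ k ∈ s.erase i, (v i - v k)) / ((v i - v j) * ∏ k ∈ s.erase j, (v j - v k)) := by
  have hvij : v i - v j ≠ 0 := sub_ne_zero.mpr fun h => hij (hvs hi hj h)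
  have hij' : i ∈ s.erase j := mem_erase.mpr ⟨hij, hi⟩
  rw [Lagrange.basis, eval_derivative_prod_of_eval_eq_zero (f := fun k => basisDivisor (v j) (v k))
    hij' eval_basisDivisor_right, derivative_basisDivisor, eval_C,
    ← mul_prod_erase (s.erase i) (fun k => v i - v k) (mem_erase.mpr ⟨hij.symm, hj⟩),
    ← mul_prod_erase (s.erase j) (fun k => v j - v k) hij', erase_right_comm]
  simp only [basisDivisor, eval_mul, eval_C, eval_sub, eval_X, prod_mul_distrib, prod_inv_distrib]
  field_simp

theorem eval_derivative_eq_sum (hvs : Set.InjOn v s) {P : F[X]} (hP : P.degree < #s) (x : F) :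
    (derivative P).eval x =
      ∑ j ∈ s, P.eval (v j) * (derivative (Lagrange.basis s v j)).eval x := by
  nth_rewrite 1 [eq_interpolate hvs hP]
  simp [interpolate_apply, eval_finsetSum]

end Lagrange

section Calculus

variable {𝕜 : Type*} [NontriviallyNormedField 𝕜]

theorem logDeriv_prod_sub_pow {ι : Type*} (s : Finset ι) (a : ι → 𝕜) (m : ι → ℕ) {x : 𝕜}
    (hx : ∀ k ∈ s, a k ≠ x) :
    logDeriv (fun z => ∏ k ∈ s, (z - a k) ^ m k) x = ∑ k ∈ s, (m k : 𝕜) / (x - a k) := by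
  rw [logDeriv_prod (f := fun k z => (z - a k) ^ m k)
    (fun k hk => pow_ne_zero _ (sub_ne_zero.mpr (hx k hk).symm)) (by fun_prop)]
  refine sum_congr rfl fun k _ => ?_
  rw [logDeriv_fun_pow (by fun_prop), logDeriv_apply, deriv_sub_const, deriv_id'', mul_one_div]

theorem deriv_div_eq_sub_logDeriv_mul {f g : 𝕜 → 𝕜} {x : 𝕜} (hf : DifferentiableAt 𝕜 f x)
    (hg : DifferentiableAt 𝕜 g x) (hgx : g x ≠ 0) :
    deriv (fun z => f z / g z) x = (deriv f x - logDeriv g x * f x) / g x := by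
  rw [deriv_fun_div hf hg hgx, logDeriv_apply]
  field_simp

end Calculus

theorem multipole_entry_eq_eval_derivative_basis {F : Type*} [Field F] {ι κ : Type*}
    [Fintype ι] [DecidableEq ι] [Fintype κ] {z : ι → F} (hz : Function.Injective z)
    (α : κ → F) (m : κ → ℕ) {i : ι} (hα : ∀ l, α l ≠ z i) (j : ι) :
    (if i = j then
        (∑ k ∈ univ.erase i, 1 / (z i - z k)) - ∑ l, (m l : F) / (z i - α l)
      else
        1 / (z i - z j) * ((∏ k ∈ univ.erase i, (z i - z k)) / ∏ k ∈ univ.erase j, (z j - z k)) *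
          ∏ l, ((z j - α l) / (z i - α l)) ^ m l) =
      (derivative (Lagrange.basis univ z j)).eval (z i) *
          ((∏ l, (z j - α l) ^ m l) / ∏ l, (z i - α l) ^ m l) -
        if i = j then ∑ l, (m l : F) / (z i - α l) else 0 := by
  have hinj : Set.InjOn z (univ : Finset ι) := hz.injOn
  split_ifs with hij
  · subst hij
    have hQ : ∏ l, (z i - α l) ^ m l ≠ 0 :=
      prod_ne_zero_iff.mpr fun l _ => pow_ne_zero _ (sub_ne_zero.mpr (hα l).symm)
    rw [Lagrange.eval_derivative_basis_self hinj (mem_univ i), div_self hQ, mul_one]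
    simp only [one_div]
  · rw [Lagrange.eval_derivative_basis_of_ne hinj (mem_univ i) (mem_univ j) hij, sub_zero,
      ← prod_div_distrib, ← div_div]
    simp only [div_pow]
    ring

/-- The multi-pole rational differentiation matrix `D_{m₁,…,m_r}` is exact on rational
functions `f z = P z / ∏_l (z − α_l)^{m_l}` with `deg P ≤ N − 1`:
`f'(z i) = Σ_j D i j * f (z j)`. -/
theorem multipole_rational_differentiation_matrix (N r : ℕ) (zs : Fin N → ℂ)
    (hz : Function.Injective zs) (α : Fin r → ℂ) (hα : ∀ l k, α l ≠ zs k)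
    (m : Fin r → ℕ) (D : Matrix (Fin N) (Fin N) ℂ)
    (hD : ∀ i j, D i j =
      if i = j then
        (∑ k ∈ Finset.univ.erase i, 1 / (zs i - zs k)) -
          ∑ l, (m l : ℂ) / (zs i - α l)
      else
        (1 / (zs i - zs j)) *
          ((∏ k ∈ Finset.univ.erase i, (zs i - zs k)) /
            (∏ k ∈ Finset.univ.erase j, (zs j - zs k))) *
          ∏ l, ((zs j - α l) / (zs i - α l)) ^ (m l))
    (P : Polynomial ℂ) (hP : P.degree ≤ (N - 1 : ℕ)) (i : Fin N) :
    deriv (fun z : ℂ => P.eval z / ∏ l, (z - α l) ^ (m l)) (zs i) =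
      ∑ j, D i j * (P.eval (zs j) / ∏ l, (zs j - α l) ^ (m l)) := by
  have hQ : ∀ j, ∏ l, (zs j - α l) ^ m l ≠ 0 := fun j =>
    prod_ne_zero_iff.mpr fun l _ => pow_ne_zero _ (sub_ne_zero.mpr (hα l j).symm)
  have hdeg : P.degree < #(univ : Finset (Fin N)) := by
    rw [card_univ, Fintype.card_fin]
    exact hP.trans_lt (WithBot.coe_lt_coe.mpr (Nat.sub_lt i.pos one_pos))
  rw [deriv_div_eq_sub_logDeriv_mul P.differentiableAt (by fun_prop) (hQ i), Polynomial.deriv,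
    Lagrange.eval_derivative_eq_sum hz.injOn hdeg, logDeriv_prod_sub_pow _ _ _ fun l _ => hα l i]
  conv_rhs => arg 2; ext j; rw [hD, multipole_entry_eq_eval_derivative_basis hz α m (hα · i) j]
  simp_rw [sub_mul, sum_sub_distrib, ite_mul, zero_mul, Fintype.sum_ite_eq, sub_div, sum_div]
  congr 1
  · refine sum_congr rfl fun j _ => ?_
    field_simp [hQ i, hQ j]
  · field_simp
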